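/- Let T be a strongly guarded pre-iterative monad on a distributive category C. Suppose that for each object W the extension T^W of T to C[W] (with guardedness f : X →_σ T^W Y iff f : W×X →_σ TY in C) is guarded pre-iterative with an iteration operator (−)^⋆ satisfying uniformity, and that J^W : C → C[W] preserves iteration. Then iteration in C[W] is strong iteration: for every inr-guarded f : W×X →_2 T(Y+X), f^⋆ = (T(snd+id)∘δ∘⟨fst,f⟩)^†. -/

import Mathlib

open CategoryTheory Limits

universe v u

variable (C : Type u) [Category.{v} C] [HasFiniteProducts C] [HasFiniteCoproducts C]

/-- The canonical distributivity morphism `(X × Y) + (X × Z) ⟶ X × (Y + Z)`. -/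
noncomputable def distCan (X Y Z : C) : (X ⨯ Y) ⨿ (X ⨯ Z) ⟶ X ⨯ (Y ⨿ Z) :=
  coprod.desc (prod.map (𝟙 X) coprod.inl) (prod.map (𝟙 X) coprod.inr)

/-- A distributive category: the canonical morphism
`(X × Y) + (X × Z) ⟶ X × (Y + Z)` is an isomorphism. -/
class Distributive : Prop where
  isIso : ∀ X Y Z : C, IsIso (distCan C X Y Z)

attribute [instance] Distributive.isIso

/-- The inverse `dist` of the canonical distributivity morphism. -/
noncomputable def distInv [Distributive C] (X Y Z : C) :
    X ⨯ (Y ⨿ Z) ⟶ (X ⨯ Y) ⨿ (X ⨯ Z) :=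
  inv (distCan C X Y Z)

/-- A monad on `C` presented as a Kleisli triple. -/
structure KMonad where
  obj : C → C
  η : ∀ X : C, X ⟶ obj X
  bind : ∀ {X Y : C}, (X ⟶ obj Y) → (obj X ⟶ obj Y)
  bind_η : ∀ X : C, bind (η X) = 𝟙 (obj X)
  η_bind : ∀ {X Y : C} (f : X ⟶ obj Y), η X ≫ bind f = f
  bind_bind : ∀ {X Y Z : C} (f : X ⟶ obj Y) (g : Y ⟶ obj Z),
      bind (f ≫ bind g) = bind f ≫ bind g

variable {C}

/-- The functorial action of a Kleisli triple. -/
def KMonad.map (M : KMonad C) {X Y : C} (f : X ⟶ Y) : M.obj X ⟶ M.obj Y :=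
  M.bind (f ≫ M.η Y)

variable (C)

/-- A strong monad on a category with finite products: a Kleisli triple together
with a strength satisfying the standard coherence conditions. -/
structure SMonad extends KMonad C where
  τ : ∀ X Y : C, X ⨯ obj Y ⟶ obj (X ⨯ Y)
  τ_natural : ∀ {X X' Y Y' : C} (f : X ⟶ X') (g : Y ⟶ Y'),
      prod.map f (bind (g ≫ η Y')) ≫ τ X' Y'
        = τ X Y ≫ bind (prod.map f g ≫ η (X' ⨯ Y'))
  τ_η : ∀ X Y : C, prod.map (𝟙 X) (η Y) ≫ τ X Y = η (X ⨯ Y)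
  τ_bind : ∀ {X Y Z : C} (f : Y ⟶ obj Z),
      prod.map (𝟙 X) (bind f) ≫ τ X Z = τ X Y ≫ bind (prod.map (𝟙 X) f ≫ τ X Z)
  τ_unitor : ∀ Y : C, τ (⊤_ C) Y ≫ bind (prod.snd ≫ η Y) = prod.snd
  τ_assoc : ∀ X Y Z : C,
      (prod.associator X Y (obj Z)).hom ≫ prod.map (𝟙 X) (τ Y Z) ≫ τ X (Y ⨯ Z) ≫
          bind ((prod.associator X Y Z).inv ≫ η ((X ⨯ Y) ⨯ Z))
        = τ (X ⨯ Y) Z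

variable {C}

/-- The morphism `δ = T dist⁻¹ ∘ τ : X × T(Y+Z) ⟶ T(X×Y + X×Z)`. -/
noncomputable def SMonad.δ [Distributive C] (M : SMonad C) (X Y Z : C) :
    X ⨯ M.obj (Y ⨿ Z) ⟶ M.obj ((X ⨯ Y) ⨿ (X ⨯ Z)) :=
  M.τ X (Y ⨿ Z) ≫ M.toKMonad.map (distInv C X Y Z)

variable (C)

/-- A (coproduct) summand `Y' ↪ Y`: a complement `compl` together with an
isomorphism `Y' ⨿ compl ≅ Y`.  The injection is `Summand.ι`. -/
structure Summand (Y' Y : C) where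
  compl : C
  iso : Y' ⨿ compl ≅ Y

namespace Summand

variable {C}

/-- The summand injection `Y' ⟶ Y`. -/
noncomputable def ι {Y' Y : C} (σ : Summand C Y' Y) : Y' ⟶ Y :=
  coprod.inl ≫ σ.iso.hom

/-- The complement injection. -/
noncomputable def ι' {Y' Y : C} (σ : Summand C Y' Y) : σ.compl ⟶ Y :=
  coprod.inr ≫ σ.iso.hom

variable (C)

/-- The canonical left summand `Y ↪ Y ⨿ Z`. -/
noncomputable def inlS (Y Z : C) : Summand C Y (Y ⨿ Z) :=
  ⟨Z, Iso.refl _⟩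

/-- The canonical right summand `Z ↪ Y ⨿ Z`. -/
noncomputable def inrS (Y Z : C) : Summand C Z (Y ⨿ Z) :=
  ⟨Y, coprod.braiding Z Y⟩

variable {C}

/-- Transport of a summand along an isomorphism of the ambient object. -/
noncomputable def ofIso {Y' Y Z : C} (σ : Summand C Y' Y) (θ : Y ≅ Z) : Summand C Y' Z :=
  ⟨σ.compl, σ.iso ≪≫ θ⟩

/-- Composition of summands: a summand of a summand is a summand. -/
noncomputable def comp {Y'' Y' Y : C} (σ : Summand C Y' Y) (θ : Summand C Y'' Y') :
    Summand C Y'' Y :=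
  ⟨θ.compl ⨿ σ.compl,
    (coprod.associator Y'' θ.compl σ.compl).symm ≪≫
      coprod.mapIso θ.iso (Iso.refl σ.compl) ≪≫ σ.iso⟩

/-- The summand `σ + id_Z : Y' ⨿ Z ↪ Y ⨿ Z` induced by `σ : Y' ↪ Y`. -/
noncomputable def sumId {Y' Y : C} (σ : Summand C Y' Y) (Z : C) :
    Summand C (Y' ⨿ Z) (Y ⨿ Z) :=
  ⟨σ.compl,
    coprod.associator Y' Z σ.compl ≪≫
      coprod.mapIso (Iso.refl Y') (coprod.braiding Z σ.compl) ≪≫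
      (coprod.associator Y' σ.compl Z).symm ≪≫
      coprod.mapIso σ.iso (Iso.refl Z)⟩

/-- The summand `id_W × σ : W × Y' ↪ W × Y` (using distributivity). -/
noncomputable def prodLeft [Distributive C] {Y' Y : C} (σ : Summand C Y' Y) (W : C) :
    Summand C (W ⨯ Y') (W ⨯ Y) :=
  ⟨W ⨯ σ.compl, asIso (distCan C W Y' σ.compl) ≪≫ prod.mapIso (Iso.refl W) σ.iso⟩

/-- The union summand `[inl ∘ inr , inr] : X ⨿ X ↪ (Y ⨿ X) ⨿ X`
used in the codiagonal law. -/
noncomputable def codiagS (Y X : C) : Summand C (X ⨿ X) ((Y ⨿ X) ⨿ X) :=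
  ⟨Y, coprod.braiding (X ⨿ X) Y ≪≫ (coprod.associator Y X X).symm⟩

end Summand

/-- A notion of abstract guardedness on a strong monad, closed under the rules
(trv), (sum), (cmp) and (str): a strongly guarded monad. -/
structure GuardStruct [Distributive C] (M : SMonad C) where
  Guarded : ∀ {X Y' Y : C}, (X ⟶ M.obj Y) → Summand C Y' Y → Prop
  trv : ∀ {X Y Z : C} (f : X ⟶ M.obj Y),
      Guarded (f ≫ M.toKMonad.map (coprod.inl : Y ⟶ Y ⨿ Z)) (Summand.inrS C Y Z)
  sum : ∀ {X Y Z' Z : C} (f : X ⟶ M.obj Z) (g : Y ⟶ M.obj Z) (σ : Summand C Z' Z),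
      Guarded f σ → Guarded g σ → Guarded (coprod.desc f g) σ
  cmp : ∀ {X Y Z V' V : C} (f : X ⟶ M.obj (Y ⨿ Z)) (g : Y ⟶ M.obj V) (h : Z ⟶ M.obj V)
      (σ : Summand C V' V), Guarded f (Summand.inrS C Y Z) → Guarded g σ →
      Guarded (f ≫ M.bind (coprod.desc g h)) σ
  str : ∀ {X Y' Y : C} (W : C) (f : X ⟶ M.obj Y) (σ : Summand C Y' Y),
      Guarded f σ → Guarded (prod.map (𝟙 W) f ≫ M.τ W Y) (σ.prodLeft W)

/-- A guarded pre-iterative monad: a guarded iteration operator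
satisfying the fixpoint law. -/
structure PreIter [Distributive C] (M : SMonad C) (G : GuardStruct C M) where
  iter : ∀ {X Y : C} (f : X ⟶ M.obj (Y ⨿ X)),
      G.Guarded f (Summand.inrS C Y X) → (X ⟶ M.obj Y)
  fixpoint : ∀ {X Y : C} (f : X ⟶ M.obj (Y ⨿ X)) (hf : G.Guarded f (Summand.inrS C Y X)),
      iter f hf = f ≫ M.bind (coprod.desc (M.η Y) (iter f hf))

variable {C}

/-- The body of the strong iteration operator:
`T(snd + id) ∘ δ ∘ ⟨fst, f⟩ : W × X ⟶ T(Y + W × X)`. -/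
noncomputable def strongBody [Distributive C] (M : SMonad C) {W X Y : C}
    (f : W ⨯ X ⟶ M.obj (Y ⨿ X)) : W ⨯ X ⟶ M.obj (Y ⨿ (W ⨯ X)) :=
  prod.lift prod.fst f ≫ M.δ W Y X ≫
    M.toKMonad.map (coprod.map prod.snd (𝟙 (W ⨯ X)))

variable (C)

/-- A guarded Elgot monad: a guarded pre-iterative monad additionally satisfying
naturality, codiagonal, uniformity and strength. -/
structure Elgot [Distributive C] (M : SMonad C) (G : GuardStruct C M)
    extends PreIter C M G where
  naturality : ∀ {X Y Z : C} (f : X ⟶ M.obj (Y ⨿ X)) (g : Y ⟶ M.obj Z)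
      (hf : G.Guarded f (Summand.inrS C Y X))
      (hf' : G.Guarded (f ≫ M.bind (coprod.desc (g ≫ M.toKMonad.map coprod.inl)
        (coprod.inr ≫ M.η (Z ⨿ X)))) (Summand.inrS C Z X)),
      iter f hf ≫ M.bind g
        = iter (f ≫ M.bind (coprod.desc (g ≫ M.toKMonad.map coprod.inl)
            (coprod.inr ≫ M.η (Z ⨿ X)))) hf'
  codiagonal : ∀ {X Y : C} (f : X ⟶ M.obj ((Y ⨿ X) ⨿ X))
      (hf : G.Guarded f (Summand.codiagS Y X))
      (h₁ : G.Guarded (f ≫ M.toKMonad.map (coprod.desc (𝟙 (Y ⨿ X)) coprod.inr))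
        (Summand.inrS C Y X))
      (h₂ : G.Guarded f (Summand.inrS C (Y ⨿ X) X))
      (h₃ : G.Guarded (iter f h₂) (Summand.inrS C Y X)),
      iter (f ≫ M.toKMonad.map (coprod.desc (𝟙 (Y ⨿ X)) coprod.inr)) h₁
        = iter (iter f h₂) h₃
  uniformity : ∀ {X Y Z : C} (f : X ⟶ M.obj (Y ⨿ X)) (g : Z ⟶ M.obj (Y ⨿ Z)) (h : Z ⟶ X)
      (hf : G.Guarded f (Summand.inrS C Y X)) (hg : G.Guarded g (Summand.inrS C Y Z)),
      h ≫ f = g ≫ M.toKMonad.map (coprod.map (𝟙 Y) h) →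
      h ≫ iter f hf = iter g hg
  strength : ∀ {X Y : C} (W : C) (f : X ⟶ M.obj (Y ⨿ X))
      (hf : G.Guarded f (Summand.inrS C Y X))
      (hf' : G.Guarded (prod.map (𝟙 W) f ≫ M.δ W Y X)
        (Summand.inrS C (W ⨯ Y) (W ⨯ X))),
      prod.map (𝟙 W) (iter f hf) ≫ M.τ W Y = iter (prod.map (𝟙 W) f ≫ M.δ W Y X) hf'

/-!
Put `g = T(snd+id) ∘ δ ∘ ⟨fst,f⟩`. The slice morphism `g ∘ snd : W × (W × X) → T(Y + W × X)`
is `J^W g`, so its slice iterate is `g^† ∘ snd`. Both `f` and `g ∘ snd` become the same body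
after reindexing along `⟨fst, id⟩`, so uniformity with `h = id` gives
`f^⋆ = (g ∘ snd)^⋆ ∘ ⟨fst, id⟩ = g^† ∘ snd ∘ ⟨fst, id⟩ = g^†`.
-/

theorem KMonad.map_comp_bind {C : Type u} [Category.{v} C] (M : KMonad C) {X Y Z : C}
    (f : X ⟶ Y) (g : Y ⟶ M.obj Z) : M.map f ≫ M.bind g = M.bind (f ≫ g) := by
  rw [KMonad.map, ← M.bind_bind, Category.assoc, M.η_bind]

section

variable {C} [Distributive C] {M : SMonad C}

-- `k ≫ g = (k ≫ η ≫ T inl) ≫ [g, g]*`, a trivially guarded morphism followed by a guarded one.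
theorem GuardStruct.guarded_precomp (G : GuardStruct C M) {A X Y' Y : C} (k : A ⟶ X)
    {g : X ⟶ M.obj Y} {σ : Summand C Y' Y} (hg : G.Guarded g σ) : G.Guarded (k ≫ g) σ := by
  have hcmp := G.cmp ((k ≫ M.η X) ≫ M.toKMonad.map (coprod.inl : X ⟶ X ⨿ X)) g g σ
    (G.trv (k ≫ M.η X)) hg
  rwa [Category.assoc, KMonad.map_comp_bind, Category.assoc, M.η_bind, coprod.inl_desc]
    at hcmp

end

theorem slice_iteration_is_strong_iteration_general {C : Type u} [Category.{v} C]
    [HasFiniteProducts C] [HasFiniteCoproducts C] [Distributive C]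
    (M : SMonad C) (G : GuardStruct C M) (P : PreIter C M G)
    -- an iteration operator on each C[W] (for the same notion of guardedness)
    (it : ∀ (W : C) {X Y : C} (f : W ⨯ X ⟶ M.obj (Y ⨿ X)),
        G.Guarded f (Summand.inrS C Y X) → (W ⨯ X ⟶ M.obj Y))
    -- and uniformity in C[W]
    (hunif : ∀ (W : C) {X Y Z : C} (f : W ⨯ X ⟶ M.obj (Y ⨿ X))
        (g : W ⨯ Z ⟶ M.obj (Y ⨿ Z)) (h : W ⨯ Z ⟶ X)
        (hf : G.Guarded f (Summand.inrS C Y X))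
        (hg : G.Guarded g (Summand.inrS C Y Z)),
        prod.lift prod.fst h ≫ f
            = prod.lift prod.fst g ≫ M.δ W Y Z ≫
                M.toKMonad.map (coprod.map prod.snd h) →
        prod.lift prod.fst h ≫ it W f hf = it W g hg)
    -- and such that J^W preserves iteration
    (hJ : ∀ (W : C) {X Y : C} (f : X ⟶ M.obj (Y ⨿ X))
        (hf : G.Guarded f (Summand.inrS C Y X))
        (hf' : G.Guarded (prod.snd ≫ f : W ⨯ X ⟶ _) (Summand.inrS C Y X)),
        it W (prod.snd ≫ f) hf' = prod.snd ≫ P.iter f hf) :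
    ∀ (W : C) {X Y : C} (f : W ⨯ X ⟶ M.obj (Y ⨿ X))
      (hf : G.Guarded f (Summand.inrS C Y X))
      (h' : G.Guarded (strongBody M f) (Summand.inrS C Y (W ⨯ X))),
      it W f hf = P.iter (strongBody M f) h' := by
  intro W X Y f hf h'
  have hJg : G.Guarded (prod.snd ≫ strongBody M f) (Summand.inrS C Y (W ⨯ X)) :=
    G.guarded_precomp (prod.snd : W ⨯ (W ⨯ X) ⟶ W ⨯ X) h'
  have hreindex : prod.lift prod.fst (𝟙 (W ⨯ X)) ≫ prod.snd ≫ strongBody M f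
      = prod.lift prod.fst f ≫ M.δ W Y X ≫
          M.toKMonad.map (coprod.map prod.snd (𝟙 (W ⨯ X))) := by
    rw [prod.lift_snd_assoc, Category.id_comp, strongBody]
  calc it W f hf
      = prod.lift prod.fst (𝟙 (W ⨯ X)) ≫ it W (prod.snd ≫ strongBody M f) hJg :=
        (hunif W _ f (𝟙 _) hJg hf hreindex).symm
    _ = P.iter (strongBody M f) h' := by
        rw [hJ W (strongBody M f) h' hJg, prod.lift_snd_assoc, Category.id_comp]

/-- If `T` is strongly guarded pre-iterative, each simple slice `C[W]` carries a
pre-iterative structure (for the same notion of guardedness) satisfying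
uniformity, and each `J^W : C ⥤ C[W]` preserves iteration, then iteration in
`C[W]` is strong iteration: `f^⋆ = (T(snd+id) ∘ δ ∘ ⟨fst,f⟩)^†`. -/
theorem slice_iteration_is_strong_iteration {C : Type u} [Category.{v} C]
    [HasFiniteProducts C] [HasFiniteCoproducts C] [Distributive C]
    (M : SMonad C) (G : GuardStruct C M) (P : PreIter C M G)
    -- an iteration operator on each C[W] (for the same notion of guardedness)
    (it : ∀ (W : C) {X Y : C} (f : W ⨯ X ⟶ M.obj (Y ⨿ X)),
        G.Guarded f (Summand.inrS C Y X) → (W ⨯ X ⟶ M.obj Y))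
    -- satisfying the fixpoint law of C[W]
    (hfix : ∀ (W : C) {X Y : C} (f : W ⨯ X ⟶ M.obj (Y ⨿ X))
        (hf : G.Guarded f (Summand.inrS C Y X)),
        it W f hf = prod.lift prod.fst f ≫ M.δ W Y X ≫
            M.bind (coprod.desc (prod.snd ≫ M.η Y) (it W f hf)))
    -- and uniformity in C[W]
    (hunif : ∀ (W : C) {X Y Z : C} (f : W ⨯ X ⟶ M.obj (Y ⨿ X))
        (g : W ⨯ Z ⟶ M.obj (Y ⨿ Z)) (h : W ⨯ Z ⟶ X)
        (hf : G.Guarded f (Summand.inrS C Y X))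
        (hg : G.Guarded g (Summand.inrS C Y Z)),
        prod.lift prod.fst h ≫ f
            = prod.lift prod.fst g ≫ M.δ W Y Z ≫
                M.toKMonad.map (coprod.map prod.snd h) →
        prod.lift prod.fst h ≫ it W f hf = it W g hg)
    -- and such that J^W preserves iteration
    (hJ : ∀ (W : C) {X Y : C} (f : X ⟶ M.obj (Y ⨿ X))
        (hf : G.Guarded f (Summand.inrS C Y X))
        (hf' : G.Guarded (prod.snd ≫ f : W ⨯ X ⟶ _) (Summand.inrS C Y X)),
        it W (prod.snd ≫ f) hf' = prod.snd ≫ P.iter f hf) :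
    ∀ (W : C) {X Y : C} (f : W ⨯ X ⟶ M.obj (Y ⨿ X))
      (hf : G.Guarded f (Summand.inrS C Y X))
      (h' : G.Guarded (strongBody M f) (Summand.inrS C Y (W ⨯ X))),
      it W f hf = P.iter (strongBody M f) h' :=
  slice_iteration_is_strong_iteration_general M G P it hunif hJ
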